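/- Let 𝔧 be a strongly stable ideal in R and J^h = (B_𝔧)S its homogenization in S = K[x_0,...,x_n]. A monomial x^γ in R belongs to N(𝔧) if and only if x_0^r x^γ belongs to N(𝔧^h) for every r ≥ 0. Dually, if J is a saturated strongly stable ideal in S, then a monomial x^γ in S belongs to N(J) if and only if its dehomogenization (x^γ)^a belongs to N(J^a), where J^a = (B_J)R. -/

import Mathlib

open MvPolynomial

namespace Paper

/-- Monomials (exponent vectors) in `N` variables. -/
abbrev Mon (N : ℕ) := Fin N →₀ ℕ

variable {N : ℕ}

/-- Total degree of a monomial. -/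
def mdeg (u : Mon N) : ℕ := u.sum fun _ e => e

/-- `BorelStep a b` : `b` is obtained from `a` by one increasing elementary move,
i.e. `x^a · x_j = x^b · x_i` with `i < j`. -/
def BorelStep (a b : Mon N) : Prop :=
  ∃ i j : Fin N, i < j ∧ a + Finsupp.single j 1 = b + Finsupp.single i 1

/-- `BorelLt a b` : `a <_B b`, i.e. `b` is obtained from `a` by a nonempty
sequence of increasing elementary moves. -/
def BorelLt (a b : Mon N) : Prop := Relation.TransGen BorelStep a b

/-- A (combinatorially encoded) monomial ideal: a set of monomials closed
under multiplication by monomials. -/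
def MonIdeal (J : Set (Mon N)) : Prop := ∀ u ∈ J, ∀ d : Mon N, u + d ∈ J

/-- A strongly stable monomial ideal. -/
def StronglyStable (J : Set (Mon N)) : Prop :=
  MonIdeal J ∧ ∀ b ∈ J, ∀ a, BorelLt b a → a ∈ J

/-- The minimal monomial basis `B_J` of a monomial ideal. -/
def MinBasis (J : Set (Mon N)) : Set (Mon N) :=
  {u | u ∈ J ∧ ∀ v ∈ J, v ≤ u → v = u}

/-- `min(x^a) ≥ max(x^h)`. -/
def StarCond (a h : Mon N) : Prop :=
  ∀ i j : Fin N, a i ≠ 0 → h j ≠ 0 → j ≤ i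


variable (K : Type) [Field K]

/-- The monomial `x^u` as a polynomial. -/
noncomputable def mono {N : ℕ} (u : Mon N) : MvPolynomial (Fin N) K :=
  MvPolynomial.monomial u (1 : K)

/-- The (actual) monomial ideal of `S` spanned by a set of monomials. -/
noncomputable def idealOf {N : ℕ} (J : Set (Mon N)) : Ideal (MvPolynomial (Fin N) K) :=
  Ideal.span (mono K '' J)

/-- The irrelevant maximal ideal `(x_0, …, x_n)`. -/
noncomputable def irrel (N : ℕ) : Ideal (MvPolynomial (Fin N) K) :=
  Ideal.span (Set.range MvPolynomial.X)

/-- The saturation `I^sat = ⋃_j (I : (x_0,…,x_n)^j)`. -/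
noncomputable def satIdeal {N : ℕ} (I : Ideal (MvPolynomial (Fin N) K)) :
    Ideal (MvPolynomial (Fin N) K) :=
  ⨆ k : ℕ, Submodule.colon I ((irrel K N ^ k : Ideal (MvPolynomial (Fin N) K)) : Set (MvPolynomial (Fin N) K))

/-- The satiety of a homogeneous ideal: the smallest `m` such that
`I_t = (I^sat)_t` for all `t ≥ m`. -/
noncomputable def satiety {N : ℕ} (I : Ideal (MvPolynomial (Fin N) K)) : ℕ :=
  sInf {m | ∀ t, m ≤ t → ∀ p : MvPolynomial (Fin N) K,
    p.IsHomogeneous t → (p ∈ I ↔ p ∈ satIdeal K I)}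

/-- The saturation of a combinatorial monomial ideal. -/
def msat {N : ℕ} (J : Set (Mon N)) : Set (Mon N) :=
  {u | ∃ k : ℕ, ∀ d : Mon N, mdeg d = k → u + d ∈ J}

/-- The satiety of a combinatorial monomial ideal. -/
noncomputable def msatiety {N : ℕ} (J : Set (Mon N)) : ℕ :=
  sInf {m | ∀ u : Mon N, m ≤ mdeg u → (u ∈ J ↔ u ∈ msat J)}

variable {n : ℕ}

/-- Embedding of monomials of `R = K[x_1,…,x_n]` into
`S = K[x_0,x_1,…,x_n]` (index `0` is the extra smallest variable `x_0`). -/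
noncomputable def emb : Mon n → Mon (n + 1) := Finsupp.mapDomain Fin.succ

/-- Dehomogenization of monomials: set `x_0 = 1`, i.e. forget the exponent
of `x_0`. -/
noncomputable def dehomM (v : Mon (n + 1)) : Mon n :=
  Finsupp.comapDomain Fin.succ v (Fin.succ_injective n).injOn

/-- The monomial ideal generated by a set `B` of monomials. -/
def genBy {N : ℕ} (B : Set (Mon N)) : Set (Mon N) :=
  {v | ∃ b ∈ B, b ≤ v}

/-- The homogenization `f^h ∈ S` of a polynomial `f ∈ R`. -/
noncomputable def homogPoly (f : MvPolynomial (Fin n) K) :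
    MvPolynomial (Fin (n + 1)) K :=
  ∑ u ∈ f.support,
    MvPolynomial.monomial (emb u + Finsupp.single 0 (f.totalDegree - mdeg u))
      (MvPolynomial.coeff u f)

/-- The dehomogenization `F^a ∈ R` of a polynomial `F ∈ S` (set `x_0 = 1`). -/
noncomputable def dehomPoly : MvPolynomial (Fin (n + 1)) K →ₐ[K] MvPolynomial (Fin n) K :=
  MvPolynomial.aeval
    (Fin.cases (motive := fun _ => MvPolynomial (Fin n) K) 1 MvPolynomial.X)

/-!
Every monomial ideal is generated by its minimal basis, and `emb` identifies divisibility in `R`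
with divisibility by monomials of `S` free of `x_0`, whatever power of `x_0` multiplies the
dividend; this gives the first equivalence. For the second, the point is that the minimal
generators of a saturated strongly stable ideal `J` do not involve `x_0`: if `x^b' x_0^k ∈ J`, then
increasing moves turn `x_0^k` into any monomial of degree `k`, so `x^b' ∈ J^sat = J`. Divisibility by
such generators is unchanged by setting `x_0 = 1`.
-/

lemma mdeg_eq_degree (u : Mon N) : mdeg u = u.degree := rfl

lemma MonIdeal.mem_genBy_minBasis_iff {J : Set (Mon N)} (hJ : MonIdeal J) {u : Mon N} :
    u ∈ genBy (MinBasis J) ↔ u ∈ J := by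
  refine ⟨fun ⟨b, hb, hbu⟩ => ?_, fun hu => ?_⟩
  · simpa [add_tsub_cancel_of_le hbu] using hJ b hb.1 (u - b)
  · obtain ⟨b, hbu, hbJ, hmin⟩ := exists_minimal_le_of_wellFoundedLT (· ∈ J) u hu
    exact ⟨b, ⟨hbJ, fun v hv hvb => le_antisymm hvb (hmin hv hvb)⟩, hbu⟩

namespace StronglyStable

variable {J : Set (Mon (n + 1))}

lemma add_single_mem (hJ : StronglyStable J) {c : Mon (n + 1)}
    (hc : c + Finsupp.single 0 1 ∈ J) (j : Fin (n + 1)) : c + Finsupp.single j 1 ∈ J := by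
  rcases eq_or_ne j 0 with rfl | hj
  · exact hc
  · exact hJ.2 _ hc _ (.single ⟨0, j, Fin.pos_of_ne_zero hj, add_right_comm _ _ _⟩)

lemma add_mem_of_add_single_zero_mem (hJ : StronglyStable J) {k : ℕ} {c d : Mon (n + 1)}
    (hc : c + Finsupp.single 0 k ∈ J) (hd : mdeg d = k) : c + d ∈ J := by
  induction k generalizing c d with
  | zero =>
    rw [mdeg_eq_degree, Finsupp.degree_eq_zero_iff] at hd
    simpa [hd] using hc
  | succ k ih =>
    obtain ⟨j, hj⟩ : ∃ j, d j ≠ 0 := by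
      by_contra! h
      simp [show d = 0 from Finsupp.ext h, mdeg_eq_degree] at hd
    obtain ⟨d', rfl⟩ : ∃ d', d = d' + Finsupp.single j 1 :=
      ⟨d - Finsupp.single j 1, (tsub_add_cancel_of_le (Finsupp.single_le_iff.mpr
        (Nat.one_le_iff_ne_zero.mpr hj))).symm⟩
    rw [mdeg_eq_degree, map_add, Finsupp.degree_single, ← mdeg_eq_degree] at hd
    have hc' : (c + d') + Finsupp.single 0 1 ∈ J := by
      rw [add_right_comm]
      refine ih ?_ (by omega)
      rwa [add_assoc, ← Finsupp.single_add, add_comm 1 k]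
    simpa only [add_assoc] using hJ.add_single_mem hc' j

lemma minBasis_apply_zero (hJ : StronglyStable J) (hJsat : J = msat J) {b : Mon (n + 1)}
    (hb : b ∈ MinBasis J) : b 0 = 0 := by
  have hb' : b.erase 0 ∈ J := by
    rw [hJsat]
    exact ⟨b 0, fun d hd =>
      hJ.add_mem_of_add_single_zero_mem (by rw [Finsupp.erase_add_single]; exact hb.1) hd⟩
  have hle : b.erase 0 ≤ b := by
    conv_rhs => rw [← Finsupp.erase_add_single 0 b]
    exact le_self_add
  rw [← hb.2 _ hb' hle, Finsupp.erase_same]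

end StronglyStable

lemma emb_apply_zero (b : Mon n) : emb b 0 = 0 :=
  Finsupp.mapDomain_of_notMem_range _ _ (by simp)

lemma emb_apply_succ (b : Mon n) (i : Fin n) : emb b i.succ = b i :=
  Finsupp.mapDomain_apply (Fin.succ_injective n) _ _

lemma dehomM_apply (v : Mon (n + 1)) (i : Fin n) : dehomM v i = v i.succ := rfl

lemma emb_le_emb_add_single_zero_iff {b γ : Mon n} {r : ℕ} :
    emb b ≤ emb γ + Finsupp.single 0 r ↔ b ≤ γ := by
  simp [Finsupp.le_def, Fin.forall_fin_succ, emb_apply_zero, emb_apply_succ,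
    Finsupp.single_apply, eq_comm (a := (0 : Fin (n + 1)))]

lemma dehomM_le_dehomM_iff {b γ : Mon (n + 1)} (hb : b 0 = 0) :
    dehomM b ≤ dehomM γ ↔ b ≤ γ := by
  simp [Finsupp.le_def, Fin.forall_fin_succ (P := fun i => b i ≤ γ i), hb, dehomM_apply]

lemma emb_add_single_zero_mem_genBy_iff {B : Set (Mon n)} {γ : Mon n} (r : ℕ) :
    emb γ + Finsupp.single 0 r ∈ genBy (emb '' B) ↔ γ ∈ genBy B := by
  simp only [genBy, Set.mem_ofPred_eq, Set.exists_mem_image, emb_le_emb_add_single_zero_iff]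

lemma dehomM_mem_genBy_iff {B : Set (Mon (n + 1))} (hB : ∀ b ∈ B, b 0 = 0) {γ : Mon (n + 1)} :
    dehomM γ ∈ genBy (dehomM '' B) ↔ γ ∈ genBy B := by
  simp only [genBy, Set.mem_ofPred_eq, Set.exists_mem_image]
  exact exists_congr fun b => and_congr_right fun hb => dehomM_le_dehomM_iff (hB b hb)

/-- (1) for `𝔧 ⊆ R` strongly stable, `x^γ ∈ N(𝔧)` iff
`x_0^r x^γ ∈ N(𝔧^h)` for all `r ≥ 0`; (2) for `J ⊆ S` saturated strongly
stable, `x^γ ∈ N(J)` iff `(x^γ)^a ∈ N(J^a)`. -/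
theorem sousEscalier_homogenize_dehomogenize {n : ℕ}
    (𝔧 : Set (Mon n)) (hss : StronglyStable 𝔧)
    (J : Set (Mon (n + 1))) (hJss : StronglyStable J) (hJsat : J = msat J) :
    (∀ γ : Mon n,
      γ ∉ 𝔧 ↔ ∀ r : ℕ, emb γ + Finsupp.single 0 r ∉ genBy (emb '' MinBasis 𝔧)) ∧
    (∀ γ : Mon (n + 1),
      γ ∉ J ↔ dehomM γ ∉ genBy (dehomM '' MinBasis J)) := by
  refine ⟨fun γ => ?_, fun γ => ?_⟩
  · rw [← hss.1.mem_genBy_minBasis_iff]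
    simp only [emb_add_single_zero_mem_genBy_iff, forall_const]
  · rw [← hJss.1.mem_genBy_minBasis_iff,
      dehomM_mem_genBy_iff fun _ hb => hJss.minBasis_apply_zero hJsat hb]

end Paper
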